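/- arXiv:1910.11458 — 3 statements merged into one kernel-verified Lean document; each statement's English description precedes it below -/
import Mathlib

section
/- The function J₅(x_{n+1},x_n,x_{n-1},x_{n-2}) = α(x_n+x_{n-2}+x_{n-1}+x_{n+1}) − αγ(x_n+x_{n-1}) − βγ x_n x_{n-1} + β(x_n x_{n-2} + x_{n-1} x_{n+1}) + 2γ x_{n+1} x_{n-2} − γ²(x_n² + x_{n-1}²) + x_n² + x_{n-2}² + x_{n-1}² + x_{n+1}² is an invariant of the linear difference equation x_{n+2} + x_{n-2} + γ(x_{n+1}+x_{n-1}) + β x_n + α = 0; that is, J₅(x_{n+2},x_{n+1},x_n,x_{n-1}) = J₅(x_{n+1},x_n,x_{n-1},x_{n-2}) whenever x_{n+2} = −x_{n-2} − γ(x_{n+1}+x_{n-1}) − β x_n − α. -/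
/-- The quadratic function `J₅` is an invariant of the linear difference equation
`x_{n+2} + x_{n-2} + γ(x_{n+1}+x_{n-1}) + β x_n + α = 0`. Here
`(u,v,w,z) = (x_{n+1}, x_n, x_{n-1}, x_{n-2})`. -/
theorem stmt10 (α β γ : ℝ) (J : ℝ → ℝ → ℝ → ℝ → ℝ)
    (hJ : ∀ u v w z, J u v w z =
      α * (v + z + w + u) - α * γ * (v + w) - β * γ * v * w
        + β * (v * z + w * u) + 2 * γ * u * z - γ ^ 2 * (v ^ 2 + w ^ 2)
        + v ^ 2 + z ^ 2 + w ^ 2 + u ^ 2) :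
    ∀ u v w z : ℝ, J (-z - γ * (u + w) - β * v - α) u v w = J u v w z := by
  intro u v w z
  rw [hJ, hJ]
  ring
end

section
/- The map Φ : ℝ⁴ → ℝ⁴ given by Φ(u,v,w,z) = (−z − γ(u+w) − βv − α, u, v, w) (one step of the linear equation x_{n+2} + x_{n-2} + γ(x_{n+1}+x_{n-1}) + β x_n + α = 0) preserves the constant Poisson bracket on ℝ⁴ with nonzero brackets {u,w} = {v,z} = −1 and {u,z} = γ: for all coordinate functions, the bracket of their pullbacks under Φ equals the pullback of their bracket. -/
/-- One step of the linear equation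
`x_{n+2} + x_{n-2} + γ(x_{n+1}+x_{n-1}) + β x_n + α = 0`, whose (constant)
Jacobian matrix is `A`, preserves the constant Poisson bracket with
`{u,w} = {v,z} = −1`, `{u,z} = γ`: `A * J * Aᵀ = J`. -/
theorem stmt12 (α β γ : ℝ) :
    let A : Matrix (Fin 4) (Fin 4) ℝ := !![-γ, -β, -γ, -1; 1, 0, 0, 0; 0, 1, 0, 0; 0, 0, 1, 0]
    let J : Matrix (Fin 4) (Fin 4) ℝ := !![0, 0, -1, γ; 0, 0, 0, -1; 1, 0, 0, 0; -γ, 1, 0, 0]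
    A * J * A.transpose = J := by
  intro A J
  show A * J * A.transpose = J
  ext i j
  fin_cases i <;> fin_cases j <;>
    simp [A, J, Matrix.mul_apply, Fin.sum_univ_four, Matrix.transpose, Matrix.vecHead, Matrix.vecTail] <;> ring
end

section
/- The Lagrangian L_II(x, x', x'') = (x'')²/2 − x(5x²/3 + r₁/2)x'' + x(x⁵ + (r₁/2)x³ + r₂) yields, via the fourth-order Euler–Lagrange equation d²/dt²(∂L/∂x'') − d/dt(∂L/∂x') + ∂L/∂x = 0 evaluated on a smooth function x(t), the equation x'''' − (10x² + r₁)x'' + 6x⁵ + 2r₁x³ − 10x(x')² + r₂ = 0. -/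
/-!
The Lagrangian has the form `L = x''²/2 − P(x) x'' + V(x)` with `P(x) = x(5x²/3 + r₁/2)`.
Hence `∂L/∂x = −P'(x) x'' + V'(x)`, `∂L/∂x' = 0` and `∂L/∂x'' = x'' − P(x)`, and the
second-order chain rule `(P ∘ x)'' = P''(x) x'² + P'(x) x''` with `P' = 5x² + r₁/2`,
`P'' = 10x` turns the Euler–Lagrange expression into the stated fourth-order polynomial one.
-/

section IteratedDeriv

variable {𝕜 : Type*} [NontriviallyNormedField 𝕜]

theorem iteratedDeriv_iteratedDeriv {F : Type*} [NormedAddCommGroup F] [NormedSpace 𝕜 F]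
    (m n : ℕ) (f : 𝕜 → F) :
    iteratedDeriv m (iteratedDeriv n f) = iteratedDeriv (m + n) f := by
  simp only [iteratedDeriv_eq_iterate, Function.iterate_add_apply]

theorem iteratedDeriv_two_sub_comp {y g x : 𝕜 → 𝕜} {t : 𝕜} (hy : ContDiffAt 𝕜 2 y t)
    (hg : ContDiffAt 𝕜 2 g (x t)) (hx : ContDiffAt 𝕜 2 x t) :
    iteratedDeriv 2 (fun s => y s - g (x s)) t
      = iteratedDeriv 2 y t
        - (iteratedDeriv 2 g (x t) * deriv x t ^ 2 + deriv g (x t) * iteratedDeriv 2 x t) := by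
  rw [iteratedDeriv_fun_sub (g := fun s => g (x s)) hy (hg.comp t hx)]
  exact congrArg _ (iteratedDeriv_comp_two hg hx)

end IteratedDeriv

noncomputable def couplingII (r1 x : ℝ) : ℝ := x * (5 * x ^ 2 / 3 + r1 / 2)

noncomputable def lagrangianII (r1 r2 x _x' x'' : ℝ) : ℝ :=
  x'' ^ 2 / 2 - couplingII r1 x * x'' + x * (x ^ 5 + r1 / 2 * x ^ 3 + r2)

namespace couplingII

variable (r1 : ℝ)

theorem contDiff : ContDiff ℝ 2 (couplingII r1) := by
  unfold couplingII
  fun_prop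

theorem deriv_eq : deriv (couplingII r1) = fun x => 5 * x ^ 2 + r1 / 2 := by
  funext x
  change deriv (fun x => x * (5 * x ^ 2 / 3 + r1 / 2)) x = _
  simp (disch := fun_prop) [deriv_fun_add, deriv_fun_mul, deriv_fun_pow, deriv_div_const]
  ring

theorem iteratedDeriv_two (x : ℝ) : iteratedDeriv 2 (couplingII r1) x = 10 * x := by
  rw [iteratedDeriv_succ, iteratedDeriv_one, deriv_eq]
  simp (disch := fun_prop) [deriv_fun_add, deriv_fun_pow]
  ring

end couplingII

namespace lagrangianII

variable (r1 r2 : ℝ)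

theorem deriv_fst (x x' x'' : ℝ) :
    deriv (fun x => lagrangianII r1 r2 x x' x'') x
      = -((5 * x ^ 2 + r1 / 2) * x'') + (6 * x ^ 5 + 2 * r1 * x ^ 3 + r2) := by
  simp (disch := fun_prop) [lagrangianII, couplingII, deriv_fun_add, deriv_fun_sub,
    deriv_fun_mul, deriv_fun_pow, deriv_div_const]
  ring

theorem deriv_snd (x x' x'' : ℝ) : deriv (fun x' => lagrangianII r1 r2 x x' x'') x' = 0 :=
  deriv_const _ _

theorem deriv_thd (x x' x'' : ℝ) :
    deriv (fun x'' => lagrangianII r1 r2 x x' x'') x'' = x'' - couplingII r1 x := by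
  simp (disch := fun_prop) [lagrangianII, deriv_fun_sub, deriv_fun_pow, deriv_div_const]
  ring

end lagrangianII

/-- The Lagrangian `L_II(x,x',x'') = (x'')²/2 − x(5x²/3 + r₁/2)x'' + x(x⁵ + (r₁/2)x³ + r₂)`
yields, via the second-order Euler–Lagrange expression
`∂L/∂x − d/dt(∂L/∂x') + d²/dt²(∂L/∂x'')`, the equation
`x'''' − (10x² + r₁)x'' + 6x⁵ + 2r₁x³ − 10x(x')² + r₂ = 0`. -/
theorem stmt16 (r1 r2 : ℝ) (x : ℝ → ℝ) (hx : ContDiff ℝ 4 x)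
    (L : ℝ → ℝ → ℝ → ℝ)
    (hL : ∀ a b c, L a b c = c ^ 2 / 2 - a * (5 * a ^ 2 / 3 + r1 / 2) * c
      + a * (a ^ 5 + r1 / 2 * a ^ 3 + r2))
    (t : ℝ) :
    deriv (fun a => L a (deriv x t) (iteratedDeriv 2 x t)) (x t)
      - deriv (fun s => deriv (fun b => L (x s) b (iteratedDeriv 2 x s)) (deriv x s)) t
      + iteratedDeriv 2
          (fun s => deriv (fun c => L (x s) (deriv x s) c) (iteratedDeriv 2 x s)) t
    = iteratedDeriv 4 x t - (10 * (x t) ^ 2 + r1) * iteratedDeriv 2 x t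
        + 6 * (x t) ^ 5 + 2 * r1 * (x t) ^ 3 - 10 * x t * (deriv x t) ^ 2 + r2 := by
  obtain rfl : L = lagrangianII r1 r2 := by
    funext a b c
    exact hL a b c
  have hx'' : ContDiff ℝ 2 (iteratedDeriv 2 x) := by
    rw [iteratedDeriv_eq_iterate]
    exact hx.iterate_deriv' 2 2
  simp only [lagrangianII.deriv_fst, lagrangianII.deriv_snd, lagrangianII.deriv_thd, deriv_const]
  rw [iteratedDeriv_two_sub_comp hx''.contDiffAt (couplingII.contDiff r1).contDiffAt
      (hx.of_le (by norm_num)).contDiffAt,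
    iteratedDeriv_iteratedDeriv, couplingII.iteratedDeriv_two, couplingII.deriv_eq]
  ring
end
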